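/- Let a, b be integers each of absolute value at least 2 with ab ≥ 6 or ab ≤ -4. Then for z in the closed unit disk with Im(z) ≥ 0, the composite map z ↦ -1/((-1/(z+a)) + b) decreases the imaginary part by at least a factor of 4, i.e., Im of the image is at most Im(z)/4. -/

import Mathlib

/-!
The composite is the Möbius map of the real determinant-one matrix `[[-1, -a], [b, ab - 1]]`,
so it divides the imaginary part by `|bz + ab - 1|²`. On the unit disk
`|bz + ab - 1| ≥ |ab - 1| - |b|`, and the arithmetic hypotheses make this at least `2`.
-/

theorem Int.abs_add_two_le_abs_mul_sub_one {a b : ℤ} (ha : 2 ≤ |a|)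
    (hab : 6 ≤ a * b ∨ a * b ≤ -4) : |b| + 2 ≤ |a * b - 1| := by
  rcases abs_cases a with ⟨h1, h2⟩ | ⟨h1, h2⟩ <;>
  rcases abs_cases b with ⟨h3, h4⟩ | ⟨h3, h4⟩ <;>
  rcases abs_cases (a * b - 1) with ⟨h5, h6⟩ | ⟨h5, h6⟩ <;>
  rcases hab with h | h <;> nlinarith

theorem neg_one_div_neg_one_div_add {K : Type*} [Field K] {u : K} (hu : u ≠ 0) (b : K) :
    -1 / (-1 / u + b) = -u / (b * u - 1) := by
  rw [div_add' _ _ _ hu, div_div_eq_mul_div]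
  ring

theorem Complex.im_div_eq_div_normSq_of_det_eq_one {p q r s : ℝ} (h : p * s - q * r = 1)
    (z : ℂ) : ((p * z + q) / (r * z + s)).im = z.im / normSq (r * z + s) := by
  rw [div_im, ← sub_div]
  congr 1
  simp only [add_re, add_im, mul_re, mul_im, ofReal_re, ofReal_im]
  linear_combination z.im * h

theorem Complex.two_le_norm_mul_add {z : ℂ} (hz : ‖z‖ ≤ 1) {r s : ℝ} (h : |r| + 2 ≤ |s|) :
    2 ≤ ‖r * z + s‖ := by
  have hrz : ‖(r : ℂ) * z‖ ≤ |r| := by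
    rw [norm_mul, norm_real, Real.norm_eq_abs]
    exact mul_le_of_le_one_right (abs_nonneg r) hz
  have := norm_sub_le ((r : ℂ) * z + s) (r * z)
  rw [add_sub_cancel_left, norm_real, Real.norm_eq_abs] at this
  linarith

theorem ST_b_ST_a_contracts_general (a b : ℤ) (ha : 2 ≤ |a|)
    (hab : 6 ≤ a * b ∨ a * b ≤ -4) (z : ℂ) (hz : ‖z‖ ≤ 1) (him : 0 ≤ z.im) :
    (-1 / ((-1 / (z + (a : ℂ))) + (b : ℂ))).im ≤ z.im / 4 := by
  have haR : (2 : ℝ) ≤ |(a : ℝ)| := by exact_mod_cast ha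
  have hza : z + a ≠ 0 := by
    intro h
    have : ‖(a : ℂ)‖ ≤ 1 := by rwa [eq_neg_of_add_eq_zero_right h, norm_neg]
    rw [Complex.norm_intCast] at this
    linarith
  have hcomp : -1 / ((-1 / (z + (a : ℂ))) + (b : ℂ)) =
      (((-1 : ℝ) : ℂ) * z + ((-a : ℝ) : ℂ)) / ((b : ℝ) * z + ((a * b - 1 : ℝ) : ℂ)) := by
    rw [neg_one_div_neg_one_div_add hza]
    push_cast
    ring_nf
  have hc : 2 ≤ ‖(b : ℝ) * z + ((a * b - 1 : ℝ) : ℂ)‖ :=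
    Complex.two_le_norm_mul_add hz (by exact_mod_cast Int.abs_add_two_le_abs_mul_sub_one ha hab)
  rw [hcomp, Complex.im_div_eq_div_normSq_of_det_eq_one (by ring),
    Complex.normSq_eq_norm_sq]
  exact div_le_div_of_nonneg_left him (by norm_num) (by nlinarith)

/-- For integers `a, b` with `|a|, |b| ≥ 2` and `ab ≥ 6` or `ab ≤ -4`, the composite
Möbius map `z ↦ -1/((-1/(z+a)) + b)` decreases the imaginary part of a point of the
closed upper half disk by at least a factor `4`. -/
theorem ST_b_ST_a_contracts (a b : ℤ) (ha : 2 ≤ |a|) (hb : 2 ≤ |b|)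
    (hab : 6 ≤ a * b ∨ a * b ≤ -4) (z : ℂ) (hz : ‖z‖ ≤ 1) (him : 0 ≤ z.im) :
    (-1 / ((-1 / (z + (a : ℂ))) + (b : ℂ))).im ≤ z.im / 4 :=
  ST_b_ST_a_contracts_general a b ha hab z hz him
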